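/- Let G₆ = g^{⊗15} be a neutral IIA GSWF on n voters and 6 alternatives with restrictions G₅, G₄, G₃ to 5, 4, 3 alternatives respectively. Then GCW(G₅) = GCW(G₆)/3 + 5·GCW(G₃)/3 − 1. -/

import Mathlib

open Finset
open scoped Classical

/-- A linear order on `m` alternatives, represented by its ranking permutation:
`σ a` is the rank of alternative `a` (rank `0` is most preferred). -/
abbrev OrderM (m : ℕ) := Equiv.Perm (Fin m)

/-- A profile of `n` voters on `m` alternatives. -/
abbrev ProfileM (n m : ℕ) := Fin n → OrderM m

/-- Voter with ranking `σ` prefers alternative `a` over alternative `b`. -/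
def PrefersM (m : ℕ) (σ : OrderM m) (a b : Fin m) : Prop := σ a < σ b

/-- The column `x^{a,b} ∈ {0,1}ⁿ` of individual preferences between `a` and `b`. -/
noncomputable def colM (n m : ℕ) (x : ProfileM n m) (a b : Fin m) : Fin n → Bool :=
  fun i => decide (PrefersM m (x i) a b)

/-- `GCW(g^{⊗C(m,2)})`: the probability that a uniform profile on `m` alternatives has a
Generalized Condorcet Winner under the neutral IIA GSWF determined by `g`. -/
noncomputable def GCWprob (n m : ℕ) (g : (Fin n → Bool) → Bool) : ℝ :=
  ((univ.filter (fun x : ProfileM n m =>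
      ∃ a : Fin m, ∀ b : Fin m, b ≠ a → g (colM n m x a b) = true)).card : ℝ) /
  (Fintype.card (ProfileM n m) : ℝ)

/-!
`GCW(G_m) = m · P(alternative 0 beats every other one)`: by oddness of `g` there is at most one
generalized Condorcet winner, and by neutrality each alternative is equally likely to be it.
Restricting a uniform ranking of six alternatives to the first `m` yields a uniform ranking of
those, so all three probabilities are read off the law of the win pattern `w ∈ {0,1}⁵` of
alternative 0 against alternatives 1, …, 5 in a six-alternative profile. Neutrality makes this law
exchangeable and oddness (reverse every ranking) makes it invariant under complementation, so
`P(w) = r_{|w|}` with `r_i = r_{5-i}`. With `p_s = P(w₁ = ⋯ = w_s = 1)` the claim reads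
`5 p₄ + 1 = 2 p₅ + 5 p₂`, a linear identity in `r₀, …, r₅`.
-/

variable {n m : ℕ}

lemma card_filter_comp_equiv {α β : Type*} [Fintype α] [Fintype β] (e : α ≃ β) (p : β → Prop)
    [DecidablePred p] :
    #{a | p (e a)} = #{b | p b} :=
  card_equiv e (by simp)

lemma colM_comm (x : ProfileM n m) {a b : Fin m} (hab : a ≠ b) :
    colM n m x b a = fun i => !colM n m x a b i := by
  funext i
  have hne : x i a ≠ x i b := (x i).injective.ne hab
  simp only [colM, PrefersM]
  rcases hne.lt_or_gt with h | h <;> simp [h, h.not_gt]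

lemma colM_relabel (x : ProfileM n m) (ρ : Equiv.Perm (Fin m)) (a b : Fin m) :
    colM n m (fun i => x i * ρ) a b = colM n m x (ρ a) (ρ b) :=
  rfl

lemma colM_reverse (x : ProfileM n m) (a b : Fin m) :
    colM n m (fun i => Fin.revPerm * x i) a b = colM n m x b a := by
  funext i
  exact decide_eq_decide.mpr Fin.rev_lt_rev

def IsGCW (g : (Fin n → Bool) → Bool) (x : ProfileM n m) (a : Fin m) : Prop :=
  ∀ b, b ≠ a → g (colM n m x a b) = true

section GCW

variable {g : (Fin n → Bool) → Bool}

lemma IsGCW.eq (hodd : ∀ z : Fin n → Bool, g (fun i => !z i) = !g z) {x : ProfileM n m}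
    {a b : Fin m} (ha : IsGCW g x a) (hb : IsGCW g x b) : a = b := by
  by_contra hab
  have h := hb a hab
  rw [colM_comm x hab, hodd, ha b (Ne.symm hab)] at h
  exact absurd h (by decide)

lemma isGCW_relabel (x : ProfileM n m) (ρ : Equiv.Perm (Fin m)) (a : Fin m) :
    IsGCW g (fun i => x i * ρ) a ↔ IsGCW g x (ρ a) := by
  simp only [IsGCW, colM_relabel]
  refine ⟨fun h b hb => ?_, fun h b hb => h (ρ b) (ρ.injective.ne hb)⟩
  simpa using h (ρ.symm b) (by rwa [Ne, Equiv.symm_apply_eq])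

lemma card_isGCW [NeZero m] (a : Fin m) :
    #{x : ProfileM n m | IsGCW g x a} = #{x : ProfileM n m | IsGCW g x 0} := by
  rw [← card_filter_comp_equiv
    (Equiv.piCongrRight fun _ : Fin n => Equiv.mulRight (Equiv.swap 0 a)) (fun x => IsGCW g x 0)]
  congr 1
  ext x
  simp only [mem_filter, mem_univ, true_and]
  change _ ↔ IsGCW g (fun i => x i * Equiv.swap 0 a) 0
  rw [isGCW_relabel, Equiv.swap_apply_left]

lemma card_exists_isGCW [NeZero m] (hodd : ∀ z : Fin n → Bool, g (fun i => !z i) = !g z) :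
    #{x : ProfileM n m | ∃ a, IsGCW g x a} = m * #{x : ProfileM n m | IsGCW g x 0} := by
  have hunion : ({x : ProfileM n m | ∃ a, IsGCW g x a} : Finset _)
      = univ.biUnion fun a => {x | IsGCW g x a} := by
    ext x; simp
  rw [hunion, card_biUnion, sum_congr rfl fun a _ => card_isGCW a]
  · simp
  · intro a _ b _ hab
    simp only [Function.onFun, disjoint_filter]
    exact fun x _ ha hb => hab (ha.eq hodd hb)

end GCW

section Restrict

variable {N : ℕ}

lemma Equiv.Perm.eq_of_lt_iff_lt {τ τ' : Equiv.Perm (Fin m)}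
    (h : ∀ a b, τ a < τ b ↔ τ' a < τ' b) : τ = τ' := by
  have hmono : StrictMono (τ.symm.trans τ') := fun x y hxy => (h _ _).1 (by simpa using hxy)
  have hid := congrArg (⇑) (Subsingleton.elim
    (hmono.orderIsoOfSurjective _ (Equiv.surjective _)) (OrderIso.refl (Fin m)))
  exact Equiv.ext fun a => by simpa using (congrFun hid (τ a)).symm

/-- The ranking of the first `m` alternatives induced by a ranking `σ` of `N ≥ m` alternatives. -/
noncomputable def restrictRanking (hm : m ≤ N) (σ : Equiv.Perm (Fin N)) : Equiv.Perm (Fin m) := by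
  let e : Fin m ↪ Fin N := (Fin.castLEEmb hm).trans σ.toEmbedding
  have hcard : (univ.map e).card = m := by simp
  refine Equiv.ofBijective (fun a => ((univ.map e).orderIsoOfFin hcard).symm
    ⟨e a, mem_map_of_mem e (mem_univ a)⟩) ?_
  rw [← Finite.injective_iff_bijective]
  intro a b hab
  simpa using e.injective (congrArg Subtype.val ((OrderIso.symm _).injective hab))

variable (hm : m ≤ N)

lemma restrictRanking_lt_iff (σ : Equiv.Perm (Fin N)) (a b : Fin m) :
    restrictRanking hm σ a < restrictRanking hm σ b
      ↔ σ (Fin.castLE hm a) < σ (Fin.castLE hm b) := by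
  simp [restrictRanking]

lemma restrictRanking_one : restrictRanking hm 1 = 1 :=
  Equiv.Perm.eq_of_lt_iff_lt fun a b => by simp [restrictRanking_lt_iff]

lemma restrictRanking_mul_viaFintypeEmbedding (σ : Equiv.Perm (Fin N)) (π : Equiv.Perm (Fin m)) :
    restrictRanking hm (σ * π.viaFintypeEmbedding (Fin.castLEEmb hm)) = restrictRanking hm σ * π :=
  Equiv.Perm.eq_of_lt_iff_lt fun a b => by
    have hext (c : Fin m) : π.viaFintypeEmbedding (Fin.castLEEmb hm) (Fin.castLE hm c)
        = Fin.castLE hm (π c) :=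
      Equiv.Perm.viaFintypeEmbedding_apply_image π (Fin.castLEEmb hm) c
    simp only [restrictRanking_lt_iff, Equiv.Perm.mul_apply, hext]

lemma card_restrictRanking_eq (τ : Equiv.Perm (Fin m)) :
    #{σ | restrictRanking hm σ = τ} = #{σ | restrictRanking hm σ = 1} := by
  rw [← card_filter_comp_equiv (Equiv.mulRight (τ.viaFintypeEmbedding (Fin.castLEEmb hm)))
    (fun σ => restrictRanking hm σ = τ)]
  congr 1
  ext σ
  simp [restrictRanking_mul_viaFintypeEmbedding]

lemma colM_restrictRanking (x : ProfileM n N) (a b : Fin m) :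
    colM n m (fun i => restrictRanking hm (x i)) a b
      = colM n N x (Fin.castLE hm a) (Fin.castLE hm b) := by
  funext i
  exact decide_eq_decide.mpr (restrictRanking_lt_iff hm (x i) a b)

end Restrict

lemma card_filter_comp_of_card_fiber {ι α β : Type*} [Fintype ι] [DecidableEq ι] [Fintype α]
    [Fintype β] [DecidableEq β] (f : α → β) {c : ℕ} (hf : ∀ b, #{a | f a = b} = c)
    (Q : (ι → β) → Prop) [DecidablePred Q] :
    #{x : ι → α | Q (f ∘ x)} = #{y | Q y} * c ^ Fintype.card ι := by
  rw [card_eq_sum_card_fiberwise (f := (f ∘ ·)) (t := {y | Q y}) fun x hx => by simpa using hx,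
    ← smul_eq_mul, ← sum_const]
  refine sum_congr rfl fun y hy => ?_
  have hfiber : ({x ∈ {x : ι → α | Q (f ∘ x)} | f ∘ x = y} : Finset _)
      = Fintype.piFinset fun i => {a | f a = y i} := by
    ext x
    simp only [mem_filter, mem_univ, true_and, Fintype.mem_piFinset, funext_iff,
      Function.comp_apply] at hy ⊢
    exact ⟨fun h => h.2, fun h => ⟨by rwa [show f ∘ x = y from funext h], h⟩⟩
  simp [hfiber, hf]

lemma card_filter_comp_div_card {ι α β : Type*} [Fintype ι] [DecidableEq ι] [Fintype α]
    [Fintype β] [DecidableEq β] (f : α → β) {c : ℕ} (hc : c ≠ 0) (hf : ∀ b, #{a | f a = b} = c)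
    (Q : (ι → β) → Prop) [DecidablePred Q] :
    (#{x : ι → α | Q (f ∘ x)} : ℝ) / Fintype.card (ι → α) = #{y | Q y} / Fintype.card (ι → β) := by
  have hall := card_filter_comp_of_card_fiber (ι := ι) f hf fun _ => True
  simp only [filter_true, card_univ] at hall
  rw [card_filter_comp_of_card_fiber f hf Q, hall]
  push_cast
  rw [mul_div_mul_right _ _ (by positivity)]

section Pattern

variable {k : ℕ} {g : (Fin n → Bool) → Bool}

noncomputable def winPattern (g : (Fin n → Bool) → Bool) (x : ProfileM n (k + 1)) : Fin k → Bool :=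
  fun j => g (colM n (k + 1) x 0 j.succ)

noncomputable def patternCount (g : (Fin n → Bool) → Bool) (w : Fin k → Bool) : ℕ :=
  #{x : ProfileM n (k + 1) | winPattern g x = w}

lemma winPattern_relabel (x : ProfileM n (k + 1)) (π : Equiv.Perm (Fin k)) :
    winPattern g (fun i => x i * Equiv.Perm.decomposeFin.symm (0, π)) = winPattern g x ∘ π := by
  funext j
  simp [winPattern, colM_relabel, Equiv.Perm.decomposeFin_symm_apply_succ]

lemma winPattern_reverse (hodd : ∀ z : Fin n → Bool, g (fun i => !z i) = !g z)
    (x : ProfileM n (k + 1)) :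
    winPattern g (fun i => Fin.revPerm * x i) = fun j => !winPattern g x j := by
  funext j
  simp only [winPattern, colM_reverse, colM_comm x (Fin.succ_ne_zero j).symm, hodd]

lemma patternCount_comp_perm (π : Equiv.Perm (Fin k)) (w : Fin k → Bool) :
    patternCount g (w ∘ π) = patternCount g w := by
  rw [patternCount, ← card_filter_comp_equiv
    (Equiv.piCongrRight fun _ => Equiv.mulRight (Equiv.Perm.decomposeFin.symm (0, π)))]
  congr 1
  ext x
  simp only [mem_filter, mem_univ, true_and]
  change winPattern g (fun i => x i * Equiv.Perm.decomposeFin.symm (0, π)) = _ ↔ _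
  rw [winPattern_relabel]
  exact π.surjective.injective_comp_right.eq_iff

lemma patternCount_not (hodd : ∀ z : Fin n → Bool, g (fun i => !z i) = !g z)
    (w : Fin k → Bool) : patternCount g (fun j => !w j) = patternCount g w := by
  rw [patternCount, ← card_filter_comp_equiv
    (Equiv.piCongrRight fun _ => Equiv.mulLeft (Fin.revPerm : Equiv.Perm (Fin (k + 1))))]
  congr 1
  ext x
  simp only [mem_filter, mem_univ, true_and]
  change winPattern g (fun i => Fin.revPerm * x i) = _ ↔ _
  rw [winPattern_reverse hodd]
  exact (Function.Injective.comp_left Bool.not_injective).eq_iff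

end Pattern

lemma eq_of_card_filter_eq_true {k : ℕ} {R : Type*} (μ : (Fin k → Bool) → R)
    (hμ : ∀ (π : Equiv.Perm (Fin k)) w, μ (w ∘ π) = μ w) {w w' : Fin k → Bool}
    (h : #{j | w j = true} = #{j | w' j = true}) : μ w = μ w' := by
  have hfiber (c : Bool) : Fintype.card {j // w j = c} = Fintype.card {j // w' j = c} := by
    have hcompl (v : Fin k → Bool) : #{j | v j = false} = k - #{j | v j = true} := by
      have := card_filter_add_card_filter_not (s := univ) fun j => v j = true
      simp only [Bool.not_eq_true, card_univ, Fintype.card_fin] at this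
      omega
    cases c <;> simp only [Fintype.card_subtype, hcompl, h]
  let π := Equiv.ofFiberEquiv fun c => Fintype.equivOfCardEq (hfiber c)
  have hπ : w' ∘ π = w := funext (Equiv.ofFiberEquiv_map _)
  rw [← hπ, hμ]

def prefixMass {k : ℕ} (μ : (Fin k → Bool) → ℕ) (s : ℕ) : ℕ :=
  ∑ w with ∀ j : Fin k, j.val < s → w j = true, μ w

-- Choose which of the last `5 - s` coordinates are `false`; this is `0` when `i < s`.
lemma card_prefix_card_eq_choose : ∀ s < 6, ∀ i < 6,
    #{w : Fin 5 → Bool | (∀ j : Fin 5, j.val < s → w j = true) ∧ #{j | w j = true} = i}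
      = (5 - s).choose (5 - i) := by
  decide

lemma prefixMass_eq_sum_choose (μ : (Fin 5 → Bool) → ℕ) (r : ℕ → ℕ)
    (hr : ∀ w, μ w = r #{j | w j = true}) {s : ℕ} (hs : s < 6) :
    prefixMass μ s = ∑ i ∈ range 6, (5 - s).choose (5 - i) * r i := by
  have hmaps : ∀ w ∈ ({w | ∀ j : Fin 5, j.val < s → w j = true} : Finset (Fin 5 → Bool)),
      #{j | w j = true} ∈ range 6 :=
    fun w _ => mem_range.2 (Nat.lt_succ_of_le ((card_filter_le _ _).trans (by simp)))
  rw [prefixMass, sum_congr rfl fun w _ => hr w, ← sum_fiberwise_of_maps_to' hmaps]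
  refine sum_congr rfl fun i hi => ?_
  rw [sum_const, filter_filter, card_prefix_card_eq_choose s hs i (mem_range.1 hi), smul_eq_mul]

lemma five_mul_prefixMass_four_add (μ : (Fin 5 → Bool) → ℕ)
    (hperm : ∀ (π : Equiv.Perm (Fin 5)) w, μ (w ∘ π) = μ w) (hnot : ∀ w, μ (fun j => !w j) = μ w) :
    5 * prefixMass μ 4 + prefixMass μ 0 = 2 * prefixMass μ 5 + 5 * prefixMass μ 2 := by
  let r i := μ fun j : Fin 5 => decide (j.val < i)
  have hr (w : Fin 5 → Bool) : μ w = r #{j | w j = true} := by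
    refine eq_of_card_filter_eq_true μ hperm ?_
    have hw : #{j | w j = true} ≤ 5 := (card_filter_le _ _).trans (by simp)
    simp only [decide_eq_true_eq, Fin.card_filter_val_lt]
    omega
  have hsymm : ∀ i < 3, r (5 - i) = r i := by
    intro i hi
    calc r (5 - i) = μ fun j => !decide (j.val < i) := by
          rw [hr]
          congr 1
          interval_cases i <;> decide
      _ = r i := hnot _
  rw [prefixMass_eq_sum_choose μ r hr (s := 4) (by norm_num),
    prefixMass_eq_sum_choose μ r hr (s := 0) (by norm_num),
    prefixMass_eq_sum_choose μ r hr (s := 5) (by norm_num),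
    prefixMass_eq_sum_choose μ r hr (s := 2) (by norm_num)]
  have h0 := hsymm 0 (by norm_num)
  have h1 := hsymm 1 (by norm_num)
  have h2 := hsymm 2 (by norm_num)
  norm_num [sum_range_succ, Nat.choose] at h0 h1 h2 ⊢
  omega

section Marginal

variable {k : ℕ} {g : (Fin n → Bool) → Bool}

lemma card_prefix_eq_prefixMass (s : ℕ) :
    #{x : ProfileM n (k + 1) | ∀ j : Fin k, j.val < s → winPattern g x j = true}
      = prefixMass (patternCount (k := k) g) s := by
  rw [card_eq_sum_card_fiberwise (f := winPattern g)
    (t := {w | ∀ j : Fin k, j.val < s → w j = true}) fun x hx => by simpa using hx]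
  refine sum_congr rfl fun w hw => ?_
  rw [filter_filter, patternCount]
  congr 1
  refine filter_congr fun x _ => ⟨fun h => h.2, fun h => ⟨?_, h⟩⟩
  rw [h]
  simpa using hw

lemma isGCW_restrictRanking_zero [NeZero m] (hm : m ≤ k + 1) (x : ProfileM n (k + 1)) :
    IsGCW g (fun i => restrictRanking hm (x i)) 0
      ↔ ∀ j : Fin k, j.val < m - 1 → winPattern g x j = true := by
  have h0 : Fin.castLE hm (0 : Fin m) = 0 := Fin.ext (by simp)
  simp only [IsGCW, colM_restrictRanking, winPattern, h0]
  constructor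
  · intro h j hj
    have hb : (⟨j.val + 1, by omega⟩ : Fin m) ≠ 0 := by simp [Fin.ext_iff]
    exact h _ hb
  · intro h b hb
    have hb0 : b.val ≠ 0 := Fin.val_ne_zero_iff.mpr hb
    rw [show Fin.castLE hm b = (⟨b.val - 1, by omega⟩ : Fin k).succ from
      Fin.ext (by simp only [Fin.val_castLE, Fin.val_succ]; omega)]
    exact h _ (show b.val - 1 < m - 1 by omega)

lemma GCWprob_eq_prefixMass [NeZero m] (hodd : ∀ z : Fin n → Bool, g (fun i => !z i) = !g z)
    (hm : m ≤ k + 1) :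
    GCWprob n m g = m * prefixMass (patternCount (k := k) g) (m - 1)
      / prefixMass (patternCount (k := k) g) 0 := by
  have hfiber := card_restrictRanking_eq hm
  have hc : #{σ | restrictRanking hm σ = 1} ≠ 0 :=
    card_ne_zero.2 ⟨1, by simp [restrictRanking_one]⟩
  have hmarg := card_filter_comp_div_card (ι := Fin n) (restrictRanking hm) hc hfiber
    fun y => IsGCW g y 0
  simp only [Function.comp_def, isGCW_restrictRanking_zero hm] at hmarg
  have htotal : Fintype.card (ProfileM n (k + 1)) = prefixMass (patternCount (k := k) g) 0 := by
    simpa using card_prefix_eq_prefixMass (g := g) (k := k) 0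
  have hGCW : GCWprob n m g
      = (#{x : ProfileM n m | ∃ a, IsGCW g x a} : ℝ) / Fintype.card (ProfileM n m) := by
    unfold GCWprob IsGCW
    congr!
  rw [hGCW, card_exists_isGCW hodd, ← card_prefix_eq_prefixMass, ← htotal]
  push_cast
  rw [mul_div_assoc, mul_div_assoc]
  congr 1
  exact hmarg.symm

end Marginal

/-- For a neutral IIA GSWF `G₆ = g^{⊗15}` on six alternatives (so `g` is odd) with
restrictions `G₅, G₃` to five and three alternatives,
`GCW(G₅) = GCW(G₆)/3 + 5·GCW(G₃)/3 − 1`. -/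
theorem stmt15 (n : ℕ) (g : (Fin n → Bool) → Bool)
    (hodd : ∀ z : Fin n → Bool, g (fun i => !z i) = !g z) :
    GCWprob n 5 g = GCWprob n 6 g / 3 + 5 * GCWprob n 3 g / 3 - 1 := by
  have key := five_mul_prefixMass_four_add (patternCount g) patternCount_comp_perm
    (patternCount_not hodd)
  have htotal : (0 : ℝ) < prefixMass (patternCount (k := 5) g) 0 := by
    rw [← card_prefix_eq_prefixMass]
    exact_mod_cast card_pos.2 ⟨fun _ => 1, by simp⟩
  rw [GCWprob_eq_prefixMass hodd (k := 5) (m := 5) (by norm_num),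
    GCWprob_eq_prefixMass hodd (k := 5) (m := 6) (by norm_num),
    GCWprob_eq_prefixMass hodd (k := 5) (m := 3) (by norm_num)]
  generalize prefixMass (patternCount (k := 5) g) = M at key htotal ⊢
  have hkey : (5 * M 4 + M 0 : ℝ) = 2 * M 5 + 5 * M 2 := by exact_mod_cast key
  field_simp
  norm_num
  linarith
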